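/- Chernoff's theorem for backward propagators: Let U(s,t), S ≤ s ≤ t ≤ T, be a backward propagator on a Banach space E with left generators A_t, and let Q_{t₁,t₂}, S ≤ t₁ ≤ t₂ ≤ T, be a family of contractions on E. Assume: (1) ∩_{t∈[S,T]} D(A_t) is dense in E; (2) there is a Banach space Y ⊆ ∩_t D(A_t), dense in E, invariant under all U(s,t), with ‖x‖_Y ≥ γ(‖x‖_E + sup_τ ‖A_τ x‖_E) for some γ > 0; (3) for every x ∈ Y and t, the map τ ↦ U(τ,t)x, [S,t] → Y, is continuous; (4) for every x ∈ Y, t ↦ A_t x is continuous into E; (5) for all x ∈ Y, (Q_{t−h,t}x − x)/h → A_t x as h ↓ 0, uniformly in t. Then for any [s,t] ⊆ [S,T], any sequence of partitions s = t_0 < t_1 < ... < t_n = t with mesh tending to 0, and any x ∈ E, Q_{t_0,t_1}···Q_{t_{n-1},t_n} x → U(s,t)x. -/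

import Mathlib

/-!
Fix `y ∈ Y` and follow the orbit `g τ = U(τ,t) y`. By the propagator law its left slope at `τ` is
`A_τ (g τ)`, continuous in `τ`, so `g (τ - h) = g τ + h • A_τ (g τ) + o(h)` uniformly in `τ`. On the
other hand Banach–Steinhaus makes the defects `h⁻¹ (Q_{τ-h,τ} - 1) - A_τ` equibounded in `L(Y,E)`,
so they tend to zero uniformly on the compact orbit `{g τ} ⊆ Y`. Together,
`‖Q_{a,b} (g b) - g a‖ = o(b - a)` uniformly, and telescoping the product of contractions bounds
`‖Q_{t₀,t₁} ⋯ Q_{t_{n-1},t_n} y - U(s,t) y‖` by `∑ o(t_{j+1} - t_j) → 0`. The products are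
contractions, so the convergence passes from the dense subspace `Y` to all of `E`.
-/

open Filter Topology Set

section

variable {E Y : Type*} [NormedAddCommGroup E] [NormedSpace ℝ E]
  [NormedAddCommGroup Y] [NormedSpace ℝ Y]

theorem ContinuousLinearMap.norm_list_prod_le_one {L : List (E →L[ℝ] E)}
    (hL : ∀ f ∈ L, ‖f‖ ≤ 1) : ‖L.prod‖ ≤ 1 :=
  List.prod_induction (‖·‖ ≤ 1)
    (fun a b ha hb => (norm_mul_le a b).trans (mul_le_one₀ ha (norm_nonneg b) hb))
    ContinuousLinearMap.norm_id_le hL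

theorem ContinuousLinearMap.norm_list_prod_apply_sub_le {f : ℕ → E →L[ℝ] E} {m : ℕ}
    (hf : ∀ j < m, ‖f j‖ ≤ 1) (G : ℕ → E) :
    ‖((List.range m).map f).prod (G m) - G 0‖ ≤
      ∑ j ∈ Finset.range m, ‖f j (G (j + 1)) - G j‖ := by
  induction m with
  | zero => simp
  | succ m ih =>
    set R := ((List.range m).map f).prod
    have hR : ‖R‖ ≤ 1 := norm_list_prod_le_one <| by
      simpa using fun j hj => hf j (by omega)
    have hsplit : ((List.range (m + 1)).map f).prod (G (m + 1)) - G 0 =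
        R (f m (G (m + 1)) - G m) + (R (G m) - G 0) := by
      simp [R, List.range_succ, map_sub]
    rw [hsplit, Finset.sum_range_succ, add_comm (∑ j ∈ _, _)]
    refine (norm_add_le _ _).trans (add_le_add ?_ (ih fun j hj => hf j (by omega)))
    exact (R.le_opNorm _).trans (mul_le_of_le_one_left (norm_nonneg _) hR)

theorem hasDerivWithinAt_Ici_iff_tendsto_slope_zero_right {f : ℝ → E} {f' : E} {x : ℝ} :
    HasDerivWithinAt f f' (Ici x) x ↔
      Tendsto (fun h => h⁻¹ • (f (x + h) - f x)) (𝓝[>] 0) (𝓝 f') := by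
  rw [← hasDerivWithinAt_Ioi_iff_Ici, hasDerivWithinAt_iff_tendsto_slope' self_notMem_Ioi,
    ← add_zero x, ← Filter.map_add_left_nhdsGT, tendsto_map'_iff]
  simp [Function.comp_def, slope_def_module]

theorem ContinuousOn.clm_apply_of_norm_le {X : Type*} [TopologicalSpace X] {B : X → Y →L[ℝ] E}
    {w : X → Y} {s : Set X} {C : ℝ} (hB : ∀ z, ContinuousOn (fun τ => B τ z) s)
    (hBC : ∀ τ ∈ s, ‖B τ‖ ≤ C) (hw : ContinuousOn w s) :
    ContinuousOn (fun τ => B τ (w τ)) s := by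
  intro σ hσ
  have hsmall : Tendsto (fun τ => B τ (w τ - w σ)) (𝓝[s] σ) (𝓝 0) := by
    refine squeeze_zero_norm' ?_ (by simpa using ((hw σ hσ).sub_const (w σ)).norm.const_mul C)
    filter_upwards [self_mem_nhdsWithin] with τ hτ
    exact (B τ).le_of_opNorm_le (hBC τ hτ) _
  have := hsmall.add (hB (w σ) σ hσ)
  simpa [ContinuousWithinAt] using this

theorem ContinuousLinearMap.exists_coe_eq_of_tendsto {α : Type*} {l : Filter α} [l.NeBot]
    {L : α → Y →L[ℝ] E} {a : Y → E} (h : ∀ z, Tendsto (fun i => L i z) l (𝓝 (a z)))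
    {C : ℝ} (hC : ∀ z, ‖a z‖ ≤ C * ‖z‖) : ∃ B : Y →L[ℝ] E, ⇑B = a :=
  ⟨(linearMapOfTendsto a (fun i => (L i : Y →ₗ[ℝ] E)) (tendsto_pi_nhds.2 h)).mkContinuous C hC,
    rfl⟩

theorem ContinuousLinearMap.tendsto_apply_of_denseRange {α : Type*} {l : Filter α}
    {F : α → E →L[ℝ] E} {C : ℝ} (hC : ∀ i, ‖F i‖ ≤ C) (L : E →L[ℝ] E) {β : Type*} {ι : β → E}
    (hι : DenseRange ι) (h : ∀ y, Tendsto (fun i => F i (ι y)) l (𝓝 (L (ι y)))) (x : E) :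
    Tendsto (fun i => F i x) l (𝓝 (L x)) := by
  have hF : Equicontinuous fun i => ⇑(F i) :=
    ((NormedSpace.equicontinuous_TFAE F).out 5 1).1 (show ∃ C, ∀ i, ‖F i‖ ≤ C from ⟨C, hC⟩)
  exact (hF.isClosed_setOfPred_tendsto L.continuous).closure_subset_iff.2
    (range_subset_iff.2 h) (hι x)

theorem eventually_forall_norm_clm_apply_lt {α : Type*} {l : Filter α} {F : α → Y →L[ℝ] E}
    {C : ℝ} (hC : ∀ i, ‖F i‖ ≤ C) (hF : ∀ z, Tendsto (fun i => F i z) l (𝓝 0))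
    {K : Set Y} (hK : IsCompact K) {ε : ℝ} (hε : 0 < ε) :
    ∀ᶠ i in l, ∀ z ∈ K, ‖F i z‖ < ε := by
  obtain ⟨N, -, hN, hKN⟩ := finite_cover_balls_of_compact hK
    (show 0 < ε / (2 * (|C| + 1)) by positivity)
  filter_upwards [(hN.eventually_all).2 fun z _ => (hF z).norm.eventually (gt_mem_nhds
    (show ‖(0 : E)‖ < ε / 2 by simpa using half_pos hε))] with i hi z hz
  obtain ⟨z', hz', hzz'⟩ := mem_iUnion₂.1 (hKN hz)
  have hnear : ‖F i (z - z')‖ ≤ ε / 2 := calc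
    ‖F i (z - z')‖ ≤ |C| * ‖z - z'‖ := (F i).le_of_opNorm_le ((hC i).trans (le_abs_self C)) _
    _ ≤ |C| * (ε / (2 * (|C| + 1))) := by
      gcongr; exact (mem_ball_iff_norm.1 hzz').le
    _ ≤ ε / 2 := by
      rw [mul_div_assoc', div_le_div_iff₀ (by positivity) two_pos]; nlinarith [abs_nonneg C]
  calc ‖F i z‖ = ‖F i (z - z') + F i z'‖ := by rw [← map_add, sub_add_cancel]
    _ ≤ ‖F i (z - z')‖ + ‖F i z'‖ := norm_add_le _ _
    _ < ε / 2 + ε / 2 := add_lt_add_of_le_of_lt hnear (hi z' hz')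
    _ = ε := add_halves ε

structure IsPartition (s t : ℝ) (k : ℕ) (p : ℕ → ℝ) : Prop where
  zero : p 0 = s
  last : p k = t
  lt_succ : ∀ j < k, p j < p (j + 1)

def chernoffProduct (Q : ℝ → ℝ → E →L[ℝ] E) (k : ℕ) (p : ℕ → ℝ) : E →L[ℝ] E :=
  ((List.range k).map fun j => Q (p j) (p (j + 1))).prod

namespace IsPartition

variable {s t : ℝ} {k : ℕ} {p : ℕ → ℝ}

theorem mem_Icc (hp : IsPartition s t k p) {j : ℕ} (hj : j ≤ k) : p j ∈ Icc s t := by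
  have hmono : ∀ i j, i ≤ j → j ≤ k → p i ≤ p j := by
    intro i j hij hjk
    induction j, hij using Nat.le_induction with
    | base => exact le_rfl
    | succ j _ ih => exact (ih (by omega)).trans (hp.lt_succ j (by omega)).le
  exact ⟨hp.zero ▸ hmono 0 j j.zero_le hj, hp.last ▸ hmono j k hj le_rfl⟩

theorem le (hp : IsPartition s t k p) : s ≤ t :=
  (hp.mem_Icc k.le_refl).1.trans_eq hp.last

theorem norm_step_le_one (hp : IsPartition s t k p) {Q : ℝ → ℝ → E →L[ℝ] E}
    (hQ : ∀ a b, s ≤ a → a < b → b ≤ t → ‖Q a b‖ ≤ 1) {j : ℕ} (hj : j < k) :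
    ‖Q (p j) (p (j + 1))‖ ≤ 1 :=
  hQ _ _ (hp.mem_Icc hj.le).1 (hp.lt_succ j hj) (hp.mem_Icc hj).2

theorem norm_chernoffProduct_le_one (hp : IsPartition s t k p) {Q : ℝ → ℝ → E →L[ℝ] E}
    (hQ : ∀ a b, s ≤ a → a < b → b ≤ t → ‖Q a b‖ ≤ 1) : ‖chernoffProduct Q k p‖ ≤ 1 :=
  ContinuousLinearMap.norm_list_prod_le_one <| by
    simpa using fun j hj => hp.norm_step_le_one hQ hj

end IsPartition

theorem eventually_forall_step_le_of_tendsto_mesh {k : ℕ → ℕ} (hk : ∀ n, 0 < k n)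
    {P : ℕ → ℕ → ℝ} (hmesh : Tendsto (fun n =>
        (Finset.range (k n)).sup' (Finset.nonempty_range_iff.mpr (hk n).ne')
          (fun j => P n (j + 1) - P n j)) atTop (𝓝 0)) {δ : ℝ} (hδ : 0 < δ) :
    ∀ᶠ n in atTop, ∀ j < k n, P n (j + 1) - P n j ≤ δ :=
  (hmesh.eventually (eventually_le_nhds hδ)).mono fun n hn _ hj =>
    (Finset.le_sup' (fun j => P n (j + 1) - P n j) (Finset.mem_range.2 hj)).trans hn

theorem tendsto_chernoffProduct_apply {Q : ℝ → ℝ → E →L[ℝ] E} {g : ℝ → E} {s t : ℝ}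
    {k : ℕ → ℕ} {P : ℕ → ℕ → ℝ} (hP : ∀ n, IsPartition s t (k n) (P n))
    (hmesh : ∀ δ > 0, ∀ᶠ n in atTop, ∀ j < k n, P n (j + 1) - P n j ≤ δ)
    (hQ : ∀ a b, s ≤ a → a < b → b ≤ t → ‖Q a b‖ ≤ 1)
    (hstep : ∀ ε > 0, ∃ δ > 0, ∀ a b, s ≤ a → a < b → b ≤ t → b - a ≤ δ →
      ‖Q a b (g b) - g a‖ ≤ ε * (b - a)) :
    Tendsto (fun n => chernoffProduct Q (k n) (P n) (g t)) atTop (𝓝 (g s)) := by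
  have hst : s ≤ t := (hP 0).le
  refine Metric.tendsto_nhds.2 fun ε hε => ?_
  obtain ⟨δ, hδ, hδstep⟩ := hstep (ε / (t - s + 1)) (by have := sub_nonneg.2 hst; positivity)
  filter_upwards [hmesh δ hδ] with n hn
  have hPn := hP n
  rw [dist_eq_norm, ← hPn.last, ← hPn.zero]
  calc ‖chernoffProduct Q (k n) (P n) (g (P n (k n))) - g (P n 0)‖
      ≤ ∑ j ∈ Finset.range (k n), ‖Q (P n j) (P n (j + 1)) (g (P n (j + 1))) - g (P n j)‖ :=
        ContinuousLinearMap.norm_list_prod_apply_sub_le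
          (fun j hj => hPn.norm_step_le_one hQ hj) (g ∘ P n)
    _ ≤ ∑ j ∈ Finset.range (k n), ε / (t - s + 1) * (P n (j + 1) - P n j) := by
        refine Finset.sum_le_sum fun j hj => ?_
        have hj := Finset.mem_range.1 hj
        exact hδstep _ _ (hPn.mem_Icc hj.le).1 (hPn.lt_succ j hj) (hPn.mem_Icc hj).2 (hn j hj)
    _ = ε / (t - s + 1) * (t - s) := by
        rw [← Finset.mul_sum, Finset.sum_range_sub (P n), hPn.last, hPn.zero]
    _ < ε := by
        rw [div_mul_eq_mul_div, div_lt_iff₀ (by linarith)]; nlinarith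

theorem exists_norm_sub_sub_smul_le_of_tendsto_left {g φ : ℝ → E} {a b : ℝ}
    (hg : ContinuousOn g (Icc a b)) (hφ : ContinuousOn φ (Icc a b))
    (hder : ∀ x ∈ Ioc a b, Tendsto (fun h => h⁻¹ • (g (x - h) - g x)) (𝓝[>] 0) (𝓝 (φ x)))
    {ε : ℝ} (hε : 0 < ε) :
    ∃ δ > 0, ∀ x h, 0 < h → h ≤ δ → a ≤ x - h → x ≤ b →
      ‖g (x - h) - g x - h • φ x‖ ≤ ε * h := by
  obtain ⟨δ, hδ, hφδ⟩ := Metric.uniformContinuousOn_iff.1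
    (isCompact_Icc.uniformContinuousOn_of_continuous hφ) ε hε
  refine ⟨δ, hδ, fun x h hh hhδ hax hxb => ?_⟩
  have hmem : ∀ u ∈ Icc 0 h, x - u ∈ Icc a b := fun u hu =>
    ⟨by linarith [hu.2], by linarith [hu.1]⟩
  set f : ℝ → E := fun u => g (x - u) - u • φ x
  have hf : ContinuousOn f (Icc 0 h) :=
    (hg.comp (continuousOn_const.sub continuousOn_id) hmem).sub
      (continuousOn_id.smul continuousOn_const)
  have hf' : ∀ u ∈ Ico 0 h, HasDerivWithinAt f (φ (x - u) - φ x) (Ici u) u := by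
    intro u hu
    have hgu : HasDerivWithinAt (fun u => g (x - u)) (φ (x - u)) (Ici u) u := by
      rw [hasDerivWithinAt_Ici_iff_tendsto_slope_zero_right]
      simpa [sub_add_eq_sub_sub] using
        hder (x - u) ⟨by linarith [hu.2], by linarith [hu.1]⟩
    simpa using hgu.fun_sub ((hasDerivAt_id u).smul_const (φ x)).hasDerivWithinAt
  have hbound : ∀ u ∈ Ico 0 h, ‖φ (x - u) - φ x‖ ≤ ε := fun u hu => by
    have := hφδ _ (hmem u (Ico_subset_Icc_self hu)) _ (hmem 0 (left_mem_Icc.2 hh.le))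
      (by simp [abs_of_nonneg hu.1]; linarith [hu.2])
    simpa [dist_eq_norm] using this.le
  have := norm_image_sub_le_of_norm_deriv_right_le_segment hf hf' hbound h
    (right_mem_Icc.2 hh.le)
  simpa [f, sub_right_comm] using this

theorem exists_clm_eq_generator {U : ℝ → ℝ → E →L[ℝ] E} {A : ℝ → E → E} {s : Set ℝ}
    {γ : ℝ} (hγ : 0 < γ) (ι : Y →L[ℝ] E)
    (hgen : ∀ τ ∈ s, ∀ z, Tendsto (fun h : ℝ => h⁻¹ • (U (τ - h) τ (ι z) - ι z)) (𝓝[>] 0)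
      (𝓝 (A τ (ι z))))
    (hnorm : ∀ z, ∀ τ ∈ s, γ * (‖ι z‖ + ‖A τ (ι z)‖) ≤ ‖z‖) :
    ∃ 𝒜 : ℝ → Y →L[ℝ] E, ∀ τ ∈ s, ‖𝒜 τ‖ ≤ γ⁻¹ ∧ ∀ z, 𝒜 τ z = A τ (ι z) := by
  have hbound : ∀ τ ∈ s, ∀ z, ‖A τ (ι z)‖ ≤ γ⁻¹ * ‖z‖ := fun τ hτ z => by
    rw [inv_mul_eq_div, le_div_iff₀ hγ]
    nlinarith [hnorm z τ hτ, norm_nonneg (ι z)]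
  have hB : ∀ τ, ∃ B : Y →L[ℝ] E, τ ∈ s → ‖B‖ ≤ γ⁻¹ ∧ ∀ z, B z = A τ (ι z) := by
    intro τ
    by_cases hτ : τ ∈ s
    · obtain ⟨B, hB⟩ := ContinuousLinearMap.exists_coe_eq_of_tendsto
        (L := fun h : ℝ => h⁻¹ • ((U (τ - h) τ).comp ι - ι)) (by simpa using hgen τ hτ)
        (hbound τ hτ)
      exact ⟨B, fun _ => ⟨B.opNorm_le_bound (by positivity) (hB ▸ hbound τ hτ), congrFun hB⟩⟩
    · exact ⟨0, fun h => absurd h hτ⟩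
  choose 𝒜 h𝒜 using hB
  exact ⟨𝒜, h𝒜⟩

theorem tendsto_left_slope_orbit {U : ℝ → ℝ → E →L[ℝ] E} {S τ t : ℝ} {x v : E}
    (hUprop : ∀ a, S ≤ a → a ≤ τ → U a t = U a τ * U τ t) (hSτ : S < τ)
    (hgen : Tendsto (fun h : ℝ => h⁻¹ • (U (τ - h) τ (U τ t x) - U τ t x)) (𝓝[>] 0) (𝓝 v)) :
    Tendsto (fun h : ℝ => h⁻¹ • (U (τ - h) t x - U τ t x)) (𝓝[>] 0) (𝓝 v) := by
  refine hgen.congr' ?_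
  filter_upwards [Ioo_mem_nhdsGT (sub_pos.2 hSτ)] with h hh
  rw [hUprop (τ - h) (by linarith [hh.2]) (by linarith [hh.1]), mul_apply_eq_comp]

section Consistency

variable {Q : ℝ → ℝ → E →L[ℝ] E} {ι : Y →L[ℝ] E} {𝒜 : ℝ → Y →L[ℝ] E} {S T C : ℝ}

theorem exists_bound_norm_quotient_sub (hQ : ∀ a b, S ≤ a → a ≤ b → b ≤ T → ‖Q a b‖ ≤ 1)
    (h𝒜 : ∀ τ ∈ Icc S T, ‖𝒜 τ‖ ≤ C) {z : Y}
    (hlim : ∀ ε > (0 : ℝ), ∃ h₀ > (0 : ℝ), ∀ h : ℝ, 0 < h → h ≤ h₀ →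
      ∀ τ : ℝ, S ≤ τ - h → τ ≤ T → ‖h⁻¹ • (Q (τ - h) τ (ι z) - ι z) - 𝒜 τ z‖ < ε) :
    ∃ M, ∀ h τ : ℝ, 0 < h → S ≤ τ - h → τ ≤ T →
      ‖h⁻¹ • (Q (τ - h) τ (ι z) - ι z) - 𝒜 τ z‖ ≤ M := by
  obtain ⟨h₀, hh₀, hsmall⟩ := hlim 1 one_pos
  refine ⟨max 1 (h₀⁻¹ * (2 * ‖ι z‖) + C * ‖z‖), fun h τ hh hSτ hτT => ?_⟩
  rcases le_or_gt h h₀ with hle | hgt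
  · exact le_max_of_le_left (hsmall h hh hle τ hSτ hτT).le
  refine le_max_of_le_right ((norm_sub_le _ _).trans (add_le_add ?_ ?_))
  · have hQz : ‖Q (τ - h) τ (ι z) - ι z‖ ≤ 2 * ‖ι z‖ := by
      have := (Q (τ - h) τ).le_of_opNorm_le (hQ _ _ hSτ (by linarith) hτT) (ι z)
      linarith [norm_sub_le (Q (τ - h) τ (ι z)) (ι z)]
    rw [norm_smul, Real.norm_eq_abs, abs_of_pos (inv_pos.2 hh)]
    exact mul_le_mul (inv_anti₀ hh₀ hgt.le) hQz (norm_nonneg _) (by positivity)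
  · exact (𝒜 τ).le_of_opNorm_le (h𝒜 τ ⟨by linarith, hτT⟩) z

theorem exists_forall_norm_quotient_sub_lt [CompleteSpace Y]
    (hQ : ∀ a b, S ≤ a → a ≤ b → b ≤ T → ‖Q a b‖ ≤ 1) (h𝒜 : ∀ τ ∈ Icc S T, ‖𝒜 τ‖ ≤ C)
    (hlim : ∀ z : Y, ∀ ε > (0 : ℝ), ∃ h₀ > (0 : ℝ), ∀ h : ℝ, 0 < h → h ≤ h₀ →
      ∀ τ : ℝ, S ≤ τ - h → τ ≤ T → ‖h⁻¹ • (Q (τ - h) τ (ι z) - ι z) - 𝒜 τ z‖ < ε)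
    {K : Set Y} (hK : IsCompact K) {ε : ℝ} (hε : 0 < ε) :
    ∃ δ > 0, ∀ h τ : ℝ, 0 < h → h ≤ δ → S ≤ τ - h → τ ≤ T →
      ∀ z ∈ K, ‖h⁻¹ • (Q (τ - h) τ (ι z) - ι z) - 𝒜 τ z‖ < ε := by
  let I := {p : ℝ × ℝ // 0 < p.1 ∧ S ≤ p.2 - p.1 ∧ p.2 ≤ T}
  let F : I → Y →L[ℝ] E := fun p => p.1.1⁻¹ • ((Q (p.1.2 - p.1.1) p.1.2).comp ι - ι) - 𝒜 p.1.2
  have hF : ∀ p z, F p z = p.1.1⁻¹ • (Q (p.1.2 - p.1.1) p.1.2 (ι z) - ι z) - 𝒜 p.1.2 z :=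
    fun _ _ => by simp [F]
  obtain ⟨M, hM⟩ := banach_steinhaus fun z =>
    (exists_bound_norm_quotient_sub hQ h𝒜 (hlim z)).imp fun M hM p =>
      (hF p z).symm ▸ hM _ _ p.2.1 p.2.2.1 p.2.2.2
  -- `comap (·.1.1) (𝓝 0)` is the filter `h → 0` uniformly in `τ`
  have hFlim : ∀ z, Tendsto (fun p => F p z) (comap (fun p : I => p.1.1) (𝓝 0)) (𝓝 0) := by
    refine fun z => Metric.tendsto_nhds.2 fun ε hε => ?_
    obtain ⟨h₀, hh₀, hsmall⟩ := hlim z ε hε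
    rw [eventually_comap]
    filter_upwards [Metric.ball_mem_nhds 0 hh₀] with h hh p rfl
    rw [dist_zero_right, hF]
    refine hsmall _ p.2.1 ?_ _ p.2.2.1 p.2.2.2
    simpa [abs_of_pos p.2.1] using (Metric.mem_ball.1 hh).le
  obtain ⟨δ, hδ, hδK⟩ := Metric.nhds_basis_closedBall.eventually_iff.1
    (eventually_comap.1 (eventually_forall_norm_clm_apply_lt hM hFlim hK hε))
  refine ⟨δ, hδ, fun h τ hh hhδ hSτ hτT z hz => ?_⟩
  simpa [hF] using hδK (by simpa [abs_of_pos hh] using hhδ) ⟨(h, τ), hh, hSτ, hτT⟩ rfl z hz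

theorem exists_norm_step_orbit_le [CompleteSpace Y] {U : ℝ → ℝ → E →L[ℝ] E} {t : ℝ}
    (ht : t ≤ T)
    (hUprop : ∀ a τ, S ≤ a → a ≤ τ → τ ≤ t → U a t = U a τ * U τ t)
    (hQ : ∀ a b, S ≤ a → a ≤ b → b ≤ T → ‖Q a b‖ ≤ 1) (h𝒜 : ∀ τ ∈ Icc S T, ‖𝒜 τ‖ ≤ C)
    (hgen : ∀ τ ∈ Icc S T, ∀ z, Tendsto (fun h : ℝ => h⁻¹ • (U (τ - h) τ (ι z) - ι z))
      (𝓝[>] 0) (𝓝 (𝒜 τ z)))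
    (h𝒜cont : ∀ z, ContinuousOn (fun τ => 𝒜 τ z) (Icc S T))
    (hlim : ∀ z : Y, ∀ ε > (0 : ℝ), ∃ h₀ > (0 : ℝ), ∀ h : ℝ, 0 < h → h ≤ h₀ →
      ∀ τ : ℝ, S ≤ τ - h → τ ≤ T → ‖h⁻¹ • (Q (τ - h) τ (ι z) - ι z) - 𝒜 τ z‖ < ε)
    {x : E} {w : ℝ → Y} (hw : ∀ τ ∈ Icc S t, ι (w τ) = U τ t x)
    (hwcont : ContinuousOn w (Icc S t)) {ε : ℝ} (hε : 0 < ε) :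
    ∃ δ > 0, ∀ a b, S ≤ a → a < b → b ≤ t → b - a ≤ δ →
      ‖Q a b (U b t x) - U a t x‖ ≤ ε * (b - a) := by
  have hsub : Icc S t ⊆ Icc S T := Icc_subset_Icc_right ht
  set φ : ℝ → E := fun τ => 𝒜 τ (w τ)
  have hφ : ContinuousOn φ (Icc S t) := ContinuousOn.clm_apply_of_norm_le
    (fun z => (h𝒜cont z).mono hsub) (fun τ hτ => h𝒜 τ (hsub hτ)) hwcont
  have hg : ContinuousOn (fun τ => U τ t x) (Icc S t) :=
    (ι.continuous.comp_continuousOn hwcont).congr fun τ hτ => (hw τ hτ).symm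
  have hder : ∀ τ ∈ Ioc S t,
      Tendsto (fun h : ℝ => h⁻¹ • (U (τ - h) t x - U τ t x)) (𝓝[>] 0) (𝓝 (φ τ)) :=
    fun τ hτ => tendsto_left_slope_orbit (fun a ha haτ => hUprop a τ ha haτ hτ.2) hτ.1 <| by
      simpa only [hw τ (Ioc_subset_Icc_self hτ)] using
        hgen τ (hsub (Ioc_subset_Icc_self hτ)) (w τ)
  obtain ⟨δ₁, hδ₁, horbit⟩ := exists_norm_sub_sub_smul_le_of_tendsto_left hg hφ hder (half_pos hε)
  obtain ⟨δ₂, hδ₂, hquot⟩ := exists_forall_norm_quotient_sub_lt hQ h𝒜 hlim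
    (isCompact_Icc.image_of_continuousOn hwcont) (half_pos hε)
  refine ⟨min δ₁ δ₂, lt_min hδ₁ hδ₂, fun a b ha hab hbt hδ => ?_⟩
  obtain ⟨h, hh, rfl⟩ : ∃ h, 0 < h ∧ a = b - h := ⟨b - a, sub_pos.2 hab, by ring⟩
  rw [sub_sub_cancel] at hδ ⊢
  have hb : b ∈ Icc S t := ⟨by linarith, hbt⟩
  have hQb := hquot h b hh (hδ.trans (min_le_right _ _)) ha (hbt.trans ht) (w b)
    (mem_image_of_mem w hb)
  rw [hw b hb] at hQb
  calc ‖Q (b - h) b (U b t x) - U (b - h) t x‖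
      = ‖h • (h⁻¹ • (Q (b - h) b (U b t x) - U b t x) - φ b) -
          (U (b - h) t x - U b t x - h • φ b)‖ := by
        rw [smul_sub, smul_inv_smul₀ hh.ne']; congr 1; abel
    _ ≤ h * (ε / 2) + ε / 2 * h := by
        refine (norm_sub_le _ _).trans
          (add_le_add ?_ (horbit b h hh (hδ.trans (min_le_left _ _)) ha hbt))
        rw [norm_smul, Real.norm_eq_abs, abs_of_pos hh]
        exact mul_le_mul_of_nonneg_left hQb.le hh.le
    _ = ε * h := by ring

end Consistency

end

theorem chernoff_backward_propagators_general {E Y : Type*}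
    [NormedAddCommGroup E] [NormedSpace ℝ E]
    [NormedAddCommGroup Y] [NormedSpace ℝ Y] [CompleteSpace Y]
    (S T : ℝ)
    (U Q : ℝ → ℝ → (E →L[ℝ] E))
    -- U is a backward propagator
    (hUprop : ∀ s τ t : ℝ, S ≤ s → s ≤ τ → τ ≤ t → t ≤ T → U s t = U s τ * U τ t)
    (hUid : ∀ s ∈ Icc S T, U s s = 1)
    -- Q is a family of contractions
    (hQcontr : ∀ t₁ t₂ : ℝ, S ≤ t₁ → t₁ ≤ t₂ → t₂ ≤ T → ‖Q t₁ t₂‖ ≤ 1)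
    -- left generators A_t with domains D t
    (D : ℝ → Set E) (A : ℝ → E → E)
    (hgen : ∀ t ∈ Icc S T, ∀ x ∈ D t,
      Tendsto (fun h : ℝ => h⁻¹ • (U (t - h) t x - x)) (𝓝[>] 0) (𝓝 (A t x)))
    -- (2) the Banach space Y, continuously and densely embedded in E, inside all domains,
    -- invariant under U, with the norm domination
    (ι : Y →L[ℝ] E) (hYdense : Dense (Set.range ι))
    (hYdom : ∀ y : Y, ∀ t ∈ Icc S T, ι y ∈ D t)
    (γ : ℝ) (hγ : 0 < γ)
    (hnorm : ∀ y : Y, ∀ τ ∈ Icc S T, γ * (‖ι y‖ + ‖A τ (ι y)‖) ≤ ‖y‖)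
    (V : ℝ → ℝ → Y → Y)
    (hV : ∀ s t : ℝ, S ≤ s → s ≤ t → t ≤ T → ∀ y : Y, ι (V s t y) = U s t (ι y))
    -- (3) continuity of τ ↦ U(τ,t)x as a map into Y
    (hVcont : ∀ y : Y, ∀ t ∈ Icc S T, ContinuousOn (fun τ => V τ t y) (Icc S t))
    -- (4) continuity of t ↦ A_t x
    (hAcont : ∀ y : Y, ContinuousOn (fun t => A t (ι y)) (Icc S T))
    -- (5) uniform in t limit (Q_{t-h,t}x - x)/h → A_t x
    (hlim : ∀ y : Y, ∀ ε > (0 : ℝ), ∃ h₀ > (0 : ℝ), ∀ h : ℝ, 0 < h → h ≤ h₀ →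
      ∀ t : ℝ, S ≤ t - h → t ≤ T →
        ‖h⁻¹ • (Q (t - h) t (ι y) - ι y) - A t (ι y)‖ < ε)
    -- a sequence of partitions of [s,t] ⊆ [S,T] with mesh tending to zero
    (s t : ℝ) (hs : S ≤ s) (hst : s ≤ t) (ht : t ≤ T)
    (k : ℕ → ℕ) (hk : ∀ n, 0 < k n)
    (P : ℕ → ℕ → ℝ)
    (hP0 : ∀ n, P n 0 = s) (hPk : ∀ n, P n (k n) = t)
    (hPmono : ∀ n, ∀ j < k n, P n j < P n (j + 1))
    (hmesh : Tendsto (fun n =>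
        (Finset.range (k n)).sup' (Finset.nonempty_range_iff.mpr (hk n).ne')
          (fun j => P n (j + 1) - P n j)) atTop (𝓝 0))
    (x : E) :
    Tendsto
      (fun n => (((List.range (k n)).map (fun j => Q (P n j) (P n (j + 1)))).prod) x)
      atTop (𝓝 (U s t x)) := by
  have htT : t ∈ Icc S T := ⟨hs.trans hst, ht⟩
  have hP : ∀ n, IsPartition s t (k n) (P n) := fun n => ⟨hP0 n, hPk n, hPmono n⟩
  have hQ : ∀ a b, s ≤ a → a < b → b ≤ t → ‖Q a b‖ ≤ 1 := fun a b ha hab hb =>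
    hQcontr a b (hs.trans ha) hab.le (hb.trans ht)
  obtain ⟨𝒜, h𝒜⟩ := exists_clm_eq_generator hγ ι
    (fun τ hτ z => hgen τ hτ _ (hYdom z τ hτ)) hnorm
  have hA : ∀ τ ∈ Icc S T, ∀ z, A τ (ι z) = 𝒜 τ z := fun τ hτ z => ((h𝒜 τ hτ).2 z).symm
  have hgen' : ∀ τ ∈ Icc S T, ∀ z, Tendsto (fun h : ℝ => h⁻¹ • (U (τ - h) τ (ι z) - ι z))
      (𝓝[>] 0) (𝓝 (𝒜 τ z)) := fun τ hτ z => hA τ hτ z ▸ hgen τ hτ _ (hYdom z τ hτ)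
  have hAcont' : ∀ z, ContinuousOn (fun τ => 𝒜 τ z) (Icc S T) := fun z =>
    (hAcont z).congr fun τ hτ => (hA τ hτ z).symm
  have hlim' : ∀ z : Y, ∀ ε > (0 : ℝ), ∃ h₀ > (0 : ℝ), ∀ h : ℝ, 0 < h → h ≤ h₀ →
      ∀ τ : ℝ, S ≤ τ - h → τ ≤ T → ‖h⁻¹ • (Q (τ - h) τ (ι z) - ι z) - 𝒜 τ z‖ < ε :=
    fun z ε hε => (hlim z ε hε).imp fun _ ⟨hh₀, hsmall⟩ => ⟨hh₀, fun h hh hhh₀ τ hSτ hτT =>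
      hA τ ⟨by linarith, hτT⟩ z ▸ hsmall h hh hhh₀ τ hSτ hτT⟩
  have hstep (y : Y) : ∀ ε > 0, ∃ δ > 0, ∀ a b, s ≤ a → a < b → b ≤ t → b - a ≤ δ →
      ‖Q a b (U b t (ι y)) - U a t (ι y)‖ ≤ ε * (b - a) := fun ε hε =>
    (exists_norm_step_orbit_le ht (fun a τ ha haτ hτt => hUprop a τ t ha haτ hτt ht) hQcontr
      (fun τ hτ => (h𝒜 τ hτ).1) hgen' hAcont' hlim' (fun τ hτ => hV τ t hτ.1 hτ.2 ht y)
      (hVcont y t htT) hε).imp fun _ ⟨hδ, hδstep⟩ => ⟨hδ, fun a b ha => hδstep a b (hs.trans ha)⟩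
  have hY (y : Y) : Tendsto (fun n => chernoffProduct Q (k n) (P n) (ι y)) atTop
      (𝓝 (U s t (ι y))) := by
    simpa [hUid t htT] using tendsto_chernoffProduct_apply (g := fun τ => U τ t (ι y)) hP
      (fun δ hδ => eventually_forall_step_le_of_tendsto_mesh hk hmesh hδ) hQ (hstep y)
  exact ContinuousLinearMap.tendsto_apply_of_denseRange
    (fun n => (hP n).norm_chernoffProduct_le_one hQ) (U s t) hYdense hY x

/-- Chernoff's theorem for backward propagators. -/
theorem chernoff_backward_propagators {E Y : Type*}
    [NormedAddCommGroup E] [NormedSpace ℝ E] [CompleteSpace E]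
    [NormedAddCommGroup Y] [NormedSpace ℝ Y] [CompleteSpace Y]
    (S T : ℝ) (hST : S ≤ T)
    (U Q : ℝ → ℝ → (E →L[ℝ] E))
    -- U is a backward propagator
    (hUprop : ∀ s τ t : ℝ, S ≤ s → s ≤ τ → τ ≤ t → t ≤ T → U s t = U s τ * U τ t)
    (hUid : ∀ s ∈ Icc S T, U s s = 1)
    -- Q is a family of contractions
    (hQcontr : ∀ t₁ t₂ : ℝ, S ≤ t₁ → t₁ ≤ t₂ → t₂ ≤ T → ‖Q t₁ t₂‖ ≤ 1)
    -- left generators A_t with domains D t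
    (D : ℝ → Set E) (A : ℝ → E → E)
    (hgen : ∀ t ∈ Icc S T, ∀ x ∈ D t,
      Tendsto (fun h : ℝ => h⁻¹ • (U (t - h) t x - x)) (𝓝[>] 0) (𝓝 (A t x)))
    -- (1) the common domain is dense
    (hdense : Dense (⋂ t ∈ Icc S T, D t))
    -- (2) the Banach space Y, continuously and densely embedded in E, inside all domains,
    -- invariant under U, with the norm domination
    (ι : Y →L[ℝ] E) (hι : Function.Injective ι) (hYdense : Dense (Set.range ι))
    (hYdom : ∀ y : Y, ∀ t ∈ Icc S T, ι y ∈ D t)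
    (γ : ℝ) (hγ : 0 < γ)
    (hnorm : ∀ y : Y, ∀ τ ∈ Icc S T, γ * (‖ι y‖ + ‖A τ (ι y)‖) ≤ ‖y‖)
    (V : ℝ → ℝ → Y → Y)
    (hV : ∀ s t : ℝ, S ≤ s → s ≤ t → t ≤ T → ∀ y : Y, ι (V s t y) = U s t (ι y))
    -- (3) continuity of τ ↦ U(τ,t)x as a map into Y
    (hVcont : ∀ y : Y, ∀ t ∈ Icc S T, ContinuousOn (fun τ => V τ t y) (Icc S t))
    -- (4) continuity of t ↦ A_t x
    (hAcont : ∀ y : Y, ContinuousOn (fun t => A t (ι y)) (Icc S T))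
    -- (5) uniform in t limit (Q_{t-h,t}x - x)/h → A_t x
    (hlim : ∀ y : Y, ∀ ε > (0 : ℝ), ∃ h₀ > (0 : ℝ), ∀ h : ℝ, 0 < h → h ≤ h₀ →
      ∀ t : ℝ, S ≤ t - h → t ≤ T →
        ‖h⁻¹ • (Q (t - h) t (ι y) - ι y) - A t (ι y)‖ < ε)
    -- a sequence of partitions of [s,t] ⊆ [S,T] with mesh tending to zero
    (s t : ℝ) (hs : S ≤ s) (hst : s ≤ t) (ht : t ≤ T)
    (k : ℕ → ℕ) (hk : ∀ n, 0 < k n)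
    (P : ℕ → ℕ → ℝ)
    (hP0 : ∀ n, P n 0 = s) (hPk : ∀ n, P n (k n) = t)
    (hPmono : ∀ n, ∀ j < k n, P n j < P n (j + 1))
    (hmesh : Tendsto (fun n =>
        (Finset.range (k n)).sup' (Finset.nonempty_range_iff.mpr (hk n).ne')
          (fun j => P n (j + 1) - P n j)) atTop (𝓝 0))
    (x : E) :
    Tendsto
      (fun n => (((List.range (k n)).map (fun j => Q (P n j) (P n (j + 1)))).prod) x)
      atTop (𝓝 (U s t x)) :=
  chernoff_backward_propagators_general S T U Q hUprop hUid hQcontr D A hgen ι hYdense hYdom γ hγ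
    hnorm V hV hVcont hAcont hlim s t hs hst ht k hk P hP0 hPk hPmono hmesh x
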